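/- arXiv:1911.01992 — 2 statements merged into one kernel-verified Lean document; each statement's English description precedes it below -/
import Mathlib

section
/- For a continuous path ψ : [0,T] → ℝ^{d'} with ψ(0) = 0 and α ∈ (0,1), the α-Hölder norm ‖ψ‖_α = sup_{s≠t} |ψ(t)−ψ(s)|/|t−s|^α is equivalent (up to constants depending only on α) to the Ciesielski wavelet norm ‖ψ‖'_α = sup_{(p,m)∈Λ} 2^{(α−1/2)p} |ψ_{pm}|, where ψ_{pm} = √(2^p/T) (2ψ(t¹_{pm}) − ψ(t⁰_{pm}) − ψ(t²_{pm})) are the Schauder–Fourier coefficients. -/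
/-!
A Schauder coefficient `ψ_{pm}` is, up to the factor `√(2^p/T)`, the second difference of `ψ`
over a dyadic interval of length `2^{-p} T`, so a Hölder bound controls it at once. Conversely,
the increment of `ψ` over a dyadic interval of level `n + 1` is half the increment over its parent
interval plus or minus half a second difference. When the second differences are `O(2^{-αp})` and
`α < 1`, this recursion keeps all level-`n` increments `O(2^{-αn})`. Chaining the increments along
the dyadic floors of a point, and using continuity to pass to the limit, then bounds
`‖ψ t - ψ s‖` by the increments at the level `n` with `2^{-n} T ≈ |t - s|`.
-/

open Set

/-- The Schauder–Fourier coefficient `ψ_{pm}` of a path `ψ : ℝ → ℝ^{d'}` on `[0,T]`,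
for `(p,m)` with `1 ≤ m ≤ 2^p`:
`ψ_{pm} = √(2^p/T) (2 ψ(t¹_{pm}) − ψ(t⁰_{pm}) − ψ(t²_{pm}))`. -/
noncomputable def schauderCoef {d : ℕ} (T : ℝ) (ψ : ℝ → EuclideanSpace ℝ (Fin d))
    (p m : ℕ) : EuclideanSpace ℝ (Fin d) :=
  Real.sqrt (2 ^ p / T) •
    ((2 : ℝ) • ψ ((2 * (m : ℝ) - 1) * T / 2 ^ (p + 1))
      - ψ (((m : ℝ) - 1) * T / 2 ^ p) - ψ ((m : ℝ) * T / 2 ^ p))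

open Filter Topology

-- In the paper's notation `t⁰_{pm} = dyadicPoint T p (m - 1)`,
-- `t¹_{pm} = dyadicPoint T (p + 1) (2m - 1)` and `t²_{pm} = dyadicPoint T p m`.
noncomputable def dyadicPoint (T : ℝ) (n k : ℕ) : ℝ := k * T / 2 ^ n

noncomputable def dyadicIndex (T : ℝ) (n : ℕ) (x : ℝ) : ℕ := ⌊x * 2 ^ n / T⌋₊

lemma half_lt_inv_two_rpow {α : ℝ} (hα : α < 1) : 1 / 2 < ((2 : ℝ) ^ α)⁻¹ := by
  rw [one_div]
  exact inv_strictAnti₀ (by positivity)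
    (by simpa using Real.rpow_lt_rpow_of_exponent_lt one_lt_two hα)

lemma inv_two_rpow_lt_one {α : ℝ} (hα : 0 < α) : ((2 : ℝ) ^ α)⁻¹ < 1 :=
  inv_lt_one_of_one_lt₀ (Real.one_lt_rpow one_lt_two hα)

lemma inv_two_rpow_pow_le {α : ℝ} (hα : 0 ≤ α) {x : ℝ} (hx : 0 < x) {n : ℕ}
    (hn : x⁻¹ < 2 ^ (n + 1)) : ((2 : ℝ) ^ α)⁻¹ ^ n ≤ (2 * x) ^ α := by
  have hx' : ((2 : ℝ) ^ (n + 1))⁻¹ ≤ x := by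
    rw [inv_le_comm₀ (by positivity) hx]; exact hn.le
  calc ((2 : ℝ) ^ α)⁻¹ ^ n = 2 ^ α * ((2 : ℝ) ^ (n + 1))⁻¹ ^ α := by
        rw [Real.inv_rpow (by positivity), ← Real.rpow_pow_comm zero_le_two, pow_succ, inv_pow]
        field_simp
    _ ≤ 2 ^ α * x ^ α := by gcongr
    _ = (2 * x) ^ α := (Real.mul_rpow zero_le_two hx.le).symm

lemma two_rpow_mul_sqrt_two_pow (α : ℝ) (p : ℕ) :
    (2 : ℝ) ^ ((α - 1 / 2) * p) * √(2 ^ p) = ((2 : ℝ) ^ α) ^ p := by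
  rw [Real.sqrt_eq_rpow, ← Real.rpow_natCast 2 p, ← Real.rpow_mul zero_le_two,
    ← Real.rpow_add two_pos, ← Real.rpow_natCast, ← Real.rpow_mul zero_le_two]
  ring_nf

section DyadicGrid

variable {T : ℝ}

@[simp] lemma dyadicPoint_zero_zero : dyadicPoint T 0 0 = 0 := by simp [dyadicPoint]

@[simp] lemma dyadicPoint_zero_one : dyadicPoint T 0 1 = T := by simp [dyadicPoint]

lemma dyadicPoint_succ_two_mul (n k : ℕ) : dyadicPoint T (n + 1) (2 * k) = dyadicPoint T n k := by
  simp only [dyadicPoint, Nat.cast_mul, Nat.cast_ofNat, pow_succ]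
  field_simp

lemma dyadicPoint_succ_sub (n k : ℕ) :
    dyadicPoint T n (k + 1) - dyadicPoint T n k = T / 2 ^ n := by
  simp only [dyadicPoint, Nat.cast_add, Nat.cast_one]
  ring

lemma dyadicPoint_mem_Icc (hT : 0 ≤ T) {n k : ℕ} (hk : k ≤ 2 ^ n) :
    dyadicPoint T n k ∈ Icc 0 T := by
  have hk' : (k : ℝ) ≤ 2 ^ n := by exact_mod_cast hk
  refine ⟨by unfold dyadicPoint; positivity, ?_⟩
  rw [dyadicPoint, div_le_iff₀ (by positivity)]
  nlinarith

lemma dyadicIndex_succ_div_two (n : ℕ) (x : ℝ) :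
    dyadicIndex T (n + 1) x / 2 = dyadicIndex T n x := by
  rw [dyadicIndex, dyadicIndex, ← Nat.floor_div_ofNat]
  congr 1
  ring

lemma dyadicIndex_le (hT : 0 < T) {x : ℝ} (hx : x ≤ T) (n : ℕ) : dyadicIndex T n x ≤ 2 ^ n := by
  refine Nat.floor_le_of_le ?_
  rw [div_le_iff₀ hT]
  push_cast
  nlinarith [pow_pos (two_pos : (0 : ℝ) < 2) n]

lemma dyadicIndex_mono (hT : 0 ≤ T) (n : ℕ) : Monotone (dyadicIndex T n) :=
  fun _ _ hst => Nat.floor_le_floor (by gcongr)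

lemma dyadicIndex_le_succ (hT : 0 < T) {n : ℕ} {s t : ℝ} (hs : 0 ≤ s) (hst : t - s ≤ T / 2 ^ n) :
    dyadicIndex T n t ≤ dyadicIndex T n s + 1 := by
  rw [dyadicIndex, dyadicIndex, ← Nat.floor_add_one (by positivity)]
  refine Nat.floor_le_floor ?_
  rw [le_div_iff₀ (by positivity)] at hst
  rw [div_add_one hT.ne', div_le_div_iff_of_pos_right hT]
  linarith

lemma dyadicPoint_dyadicIndex_mem_Icc (hT : 0 < T) {x : ℝ} (hx : x ∈ Icc 0 T) (n : ℕ) :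
    dyadicPoint T n (dyadicIndex T n x) ∈ Icc 0 T :=
  dyadicPoint_mem_Icc hT.le (dyadicIndex_le hT hx.2 n)

lemma dyadicPoint_dyadicIndex_mem_Icc_sub (hT : 0 < T) {x : ℝ} (hx : 0 ≤ x) (n : ℕ) :
    dyadicPoint T n (dyadicIndex T n x) ∈ Icc (x - T / 2 ^ n) x := by
  have h2n : (0 : ℝ) < 2 ^ n := by positivity
  have hfloor := Nat.floor_le (a := x * 2 ^ n / T) (by positivity)
  have hfloor' := Nat.lt_floor_add_one (x * 2 ^ n / T)
  rw [le_div_iff₀ hT] at hfloor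
  rw [div_lt_iff₀ hT] at hfloor'
  rw [dyadicPoint, dyadicIndex]
  constructor
  · rw [sub_le_iff_le_add, ← add_div, le_div_iff₀ h2n]
    linarith
  · rw [div_le_iff₀ h2n]
    linarith

lemma tendsto_dyadicPoint_dyadicIndex (hT : 0 < T) {x : ℝ} (hx : 0 ≤ x) :
    Tendsto (fun n ↦ dyadicPoint T n (dyadicIndex T n x)) atTop (𝓝 x) := by
  have hlim : Tendsto (fun n : ℕ ↦ x - T / 2 ^ n) atTop (𝓝 x) := by
    simpa using tendsto_const_nhds.sub
      (tendsto_const_nhds.div_atTop (tendsto_pow_atTop_atTop_of_one_lt (one_lt_two (α := ℝ))))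
  exact tendsto_of_tendsto_of_tendsto_of_le_of_le hlim tendsto_const_nhds
    (fun n ↦ (dyadicPoint_dyadicIndex_mem_Icc_sub hT hx n).1)
    (fun n ↦ (dyadicPoint_dyadicIndex_mem_Icc_sub hT hx n).2)

end DyadicGrid

section Increments

variable {E : Type*} [SeminormedAddCommGroup E] [NormedSpace ℝ E]

-- `secondDiff ψ T p k` is `ψ_{p,k+1} / √(2^p/T)`; the shift to a 0-based `k` avoids truncated
-- subtraction in `m - 1`.
noncomputable def secondDiff (ψ : ℝ → E) (T : ℝ) (p k : ℕ) : E :=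
  (2 : ℝ) • ψ (dyadicPoint T (p + 1) (2 * k + 1)) - ψ (dyadicPoint T p k)
    - ψ (dyadicPoint T p (k + 1))

variable {ψ : ℝ → E} {T : ℝ}

lemma dyadic_increment_two_mul (n k : ℕ) :
    ψ (dyadicPoint T (n + 1) (2 * k + 1)) - ψ (dyadicPoint T (n + 1) (2 * k)) =
      (2 : ℝ)⁻¹ • (ψ (dyadicPoint T n (k + 1)) - ψ (dyadicPoint T n k) + secondDiff ψ T n k) := by
  rw [secondDiff, dyadicPoint_succ_two_mul]
  module

lemma dyadic_increment_two_mul_add_one (n k : ℕ) :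
    ψ (dyadicPoint T (n + 1) (2 * k + 1 + 1)) - ψ (dyadicPoint T (n + 1) (2 * k + 1)) =
      (2 : ℝ)⁻¹ • (ψ (dyadicPoint T n (k + 1)) - ψ (dyadicPoint T n k) - secondDiff ψ T n k) := by
  rw [secondDiff, show 2 * k + 1 + 1 = 2 * (k + 1) by ring, dyadicPoint_succ_two_mul]
  module

-- Halving an interval halves the increment up to a second difference; `r > 1/2` makes the bound
-- `K r^n` with `(K + M) / 2 ≤ r K` self-reproducing.
theorem norm_dyadic_increment_le {B M r : ℝ} (hr : 1 / 2 < r) (hM : 0 ≤ M)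
    (h0 : ‖ψ T - ψ 0‖ ≤ B) (hX : ∀ p k : ℕ, k < 2 ^ p → ‖secondDiff ψ T p k‖ ≤ M * r ^ p)
    (n k : ℕ) (hk : k < 2 ^ n) :
    ‖ψ (dyadicPoint T n (k + 1)) - ψ (dyadicPoint T n k)‖ ≤ (B + M / (2 * r - 1)) * r ^ n := by
  set K := B + M / (2 * r - 1)
  have hr' : 0 < 2 * r - 1 := by linarith
  have hB : 0 ≤ B := (norm_nonneg _).trans h0
  have hKM : K + M ≤ 2 * r * K := by
    have : M = (2 * r - 1) * (M / (2 * r - 1)) := by field_simp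
    nlinarith
  induction n generalizing k with
  | zero =>
    obtain rfl : k = 0 := by simpa using hk
    simpa using h0.trans (le_add_of_nonneg_right (div_nonneg hM hr'.le))
  | succ n ih =>
    have half_le : ∀ a b : E, ‖a‖ ≤ K * r ^ n → ‖b‖ ≤ M * r ^ n →
        ‖(2 : ℝ)⁻¹ • (a + b)‖ ≤ K * r ^ (n + 1) ∧ ‖(2 : ℝ)⁻¹ • (a - b)‖ ≤ K * r ^ (n + 1) := by
      intro a b ha hb
      have hrn : 0 ≤ r ^ n := pow_nonneg (by linarith) n
      have key : (2 : ℝ)⁻¹ * (K * r ^ n + M * r ^ n) ≤ K * r ^ (n + 1) := by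
        rw [pow_succ]; nlinarith
      simp only [norm_smul, norm_inv, Real.norm_ofNat]
      exact ⟨(mul_le_mul_of_nonneg_left ((norm_add_le a b).trans (add_le_add ha hb))
          (by norm_num)).trans key,
        (mul_le_mul_of_nonneg_left ((norm_sub_le a b).trans (add_le_add ha hb))
          (by norm_num)).trans key⟩
    obtain ⟨j, rfl | rfl⟩ := Nat.even_or_odd' k
    · have hj : j < 2 ^ n := by rw [pow_succ] at hk; omega
      rw [dyadic_increment_two_mul]
      exact (half_le _ _ (ih j hj) (hX n j hj)).1
    · have hj : j < 2 ^ n := by rw [pow_succ] at hk; omega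
      rw [dyadic_increment_two_mul_add_one]
      exact (half_le _ _ (ih j hj) (hX n j hj)).2

lemma norm_secondDiff_le_of_holder {B α : ℝ} (hT : 0 ≤ T)
    (hH : ∀ s ∈ Icc 0 T, ∀ t ∈ Icc 0 T, ‖ψ t - ψ s‖ ≤ B * |t - s| ^ α) {p k : ℕ} (hk : k < 2 ^ p) :
    ‖secondDiff ψ T p k‖ ≤ 2 * B * (T / 2 ^ (p + 1)) ^ α := by
  have hmem : ∀ j ≤ 2 * k + 2, dyadicPoint T (p + 1) j ∈ Icc 0 T := fun j hj ↦
    dyadicPoint_mem_Icc hT (by rw [pow_succ]; omega)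
  have hstep : ∀ j ≤ 2 * k + 1, ‖ψ (dyadicPoint T (p + 1) (j + 1)) - ψ (dyadicPoint T (p + 1) j)‖
      ≤ B * (T / 2 ^ (p + 1)) ^ α := fun j hj ↦ by
    have h := hH _ (hmem j (by omega)) _ (hmem (j + 1) (by omega))
    rwa [dyadicPoint_succ_sub, abs_of_nonneg (by positivity)] at h
  have hsplit : secondDiff ψ T p k =
      (ψ (dyadicPoint T (p + 1) (2 * k + 1)) - ψ (dyadicPoint T (p + 1) (2 * k)))
        - (ψ (dyadicPoint T (p + 1) (2 * k + 1 + 1)) - ψ (dyadicPoint T (p + 1) (2 * k + 1))) := by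
    rw [secondDiff, show 2 * k + 1 + 1 = 2 * (k + 1) by ring, dyadicPoint_succ_two_mul,
      dyadicPoint_succ_two_mul]
    module
  rw [hsplit]
  linarith [norm_sub_le (ψ (dyadicPoint T (p + 1) (2 * k + 1)) - ψ (dyadicPoint T (p + 1) (2 * k)))
    (ψ (dyadicPoint T (p + 1) (2 * k + 1 + 1)) - ψ (dyadicPoint T (p + 1) (2 * k + 1))),
    hstep (2 * k) (by omega), hstep (2 * k + 1) le_rfl]

end Increments

section Holder

variable {E : Type*} [SeminormedAddCommGroup E] {ψ : ℝ → E} {T K : ℝ}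

theorem dist_dyadicPoint_dyadicIndex_le {r : ℝ} (hT : 0 < T) (hr0 : 0 ≤ r) (hr1 : r < 1)
    (hψ : ContinuousOn ψ (Icc 0 T))
    (hδ : ∀ n k : ℕ, k < 2 ^ n →
      ‖ψ (dyadicPoint T n (k + 1)) - ψ (dyadicPoint T n k)‖ ≤ K * r ^ n)
    {x : ℝ} (hx : x ∈ Icc 0 T) (n : ℕ) :
    dist (ψ (dyadicPoint T n (dyadicIndex T n x))) (ψ x) ≤ K * r * r ^ n / (1 - r) := by
  have hK : 0 ≤ K := by simpa using (norm_nonneg _).trans (hδ 0 0 one_pos)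
  refine dist_le_of_le_geometric_of_tendsto r (K * r)
    (f := fun n ↦ ψ (dyadicPoint T n (dyadicIndex T n x))) hr1 (fun k ↦ ?_) ?_ n
  · set i := dyadicIndex T k x
    have hsucc : dyadicIndex T (k + 1) x = 2 * i ∨ dyadicIndex T (k + 1) x = 2 * i + 1 := by
      have := dyadicIndex_succ_div_two (T := T) k x
      omega
    rcases hsucc with h | h
    · rw [h, dyadicPoint_succ_two_mul, dist_self]
      positivity
    · have hi : 2 * i < 2 ^ (k + 1) := by
        have := dyadicIndex_le hT hx.2 (k + 1)
        omega
      rw [h, ← dyadicPoint_succ_two_mul, dist_eq_norm', mul_assoc, ← pow_succ']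
      exact hδ (k + 1) (2 * i) hi
  · exact (hψ x hx).tendsto.comp (tendsto_nhdsWithin_iff.mpr
      ⟨tendsto_dyadicPoint_dyadicIndex hT hx.1,
        Eventually.of_forall (dyadicPoint_dyadicIndex_mem_Icc hT hx)⟩)

-- Compare `s` and `t` with their level-`n` dyadic floors, where `2^{-n-1} T < |t - s| ≤ 2^{-n} T`:
-- the floors are equal or adjacent.
theorem norm_sub_le_of_dyadic_increment_le {α : ℝ} (hT : 0 < T) (hα : 0 < α)
    (hψ : ContinuousOn ψ (Icc 0 T))
    (hδ : ∀ n k : ℕ, k < 2 ^ n →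
      ‖ψ (dyadicPoint T n (k + 1)) - ψ (dyadicPoint T n k)‖ ≤ K * ((2 : ℝ) ^ α)⁻¹ ^ n)
    {s t : ℝ} (hs : s ∈ Icc 0 T) (ht : t ∈ Icc 0 T) :
    ‖ψ t - ψ s‖ ≤
      K * ((1 + ((2 : ℝ) ^ α)⁻¹) / (1 - ((2 : ℝ) ^ α)⁻¹)) * (2 * (|t - s| / T)) ^ α := by
  wlog hst : s ≤ t generalizing s t
  · simpa [norm_sub_rev, abs_sub_comm] using this ht hs (le_of_not_ge hst)
  have hr0 : 0 < ((2 : ℝ) ^ α)⁻¹ := by positivity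
  have hr1 := inv_two_rpow_lt_one hα
  set r := ((2 : ℝ) ^ α)⁻¹
  have hK : 0 ≤ K := by simpa using (norm_nonneg _).trans (hδ 0 0 one_pos)
  rcases hst.eq_or_lt with rfl | hst
  · simp [Real.zero_rpow hα.ne']
  obtain ⟨n, hn, hn'⟩ := exists_nat_pow_near (x := T / (t - s))
    ((one_le_div (sub_pos.2 hst)).2 (by linarith [hs.1, ht.2])) one_lt_two
  have hmid : ‖ψ (dyadicPoint T n (dyadicIndex T n t)) - ψ (dyadicPoint T n (dyadicIndex T n s))‖
      ≤ K * r ^ n := by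
    have hle := dyadicIndex_mono hT.le n hst.le
    have hle' := dyadicIndex_le_succ hT (t := t) hs.1
      ((le_div_comm₀ (by positivity) (sub_pos.2 hst)).1 hn)
    rcases (show dyadicIndex T n t = dyadicIndex T n s ∨ dyadicIndex T n t = dyadicIndex T n s + 1
      by omega) with h | h
    · rw [h, sub_self, norm_zero]; positivity
    · rw [h]
      exact hδ n _ (by have := dyadicIndex_le hT ht.2 n; omega)
  have hrn : r ^ n ≤ (2 * (|t - s| / T)) ^ α := by
    rw [abs_of_pos (sub_pos.2 hst)]
    exact inv_two_rpow_pow_le hα.le (by positivity) (by rwa [inv_div])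
  have hfloor : ∀ x ∈ Icc 0 T,
      dist (ψ (dyadicPoint T n (dyadicIndex T n x))) (ψ x) ≤ K * r * r ^ n / (1 - r) :=
    fun x hx ↦ dist_dyadicPoint_dyadicIndex_le hT hr0.le hr1 hψ hδ hx n
  rw [← dist_eq_norm]
  calc dist (ψ t) (ψ s)
      ≤ dist (ψ t) (ψ (dyadicPoint T n (dyadicIndex T n t)))
        + dist (ψ (dyadicPoint T n (dyadicIndex T n t))) (ψ (dyadicPoint T n (dyadicIndex T n s)))
        + dist (ψ (dyadicPoint T n (dyadicIndex T n s))) (ψ s) := dist_triangle4 ..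
    _ ≤ K * r * r ^ n / (1 - r) + K * r ^ n + K * r * r ^ n / (1 - r) := by
        rw [dist_comm (ψ t)]
        exact add_le_add (add_le_add (hfloor t ht) ((dist_eq_norm _ _).trans_le hmid))
          (hfloor s hs)
    _ = K * ((1 + r) / (1 - r)) * r ^ n := by
        field_simp [(sub_pos.2 hr1).ne']
        ring
    _ ≤ K * ((1 + r) / (1 - r)) * (2 * (|t - s| / T)) ^ α := by
        gcongr

end Holder

-- With `r = 2^{-α}`: the factor `1 + √T / (2r - 1)` comes from `norm_dyadic_increment_le`, the
-- other two from `norm_sub_le_of_dyadic_increment_le`.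
noncomputable def waveletToHolderConst (T α : ℝ) : ℝ :=
  (1 + √T / (2 * ((2 : ℝ) ^ α)⁻¹ - 1)) * ((1 + ((2 : ℝ) ^ α)⁻¹) / (1 - ((2 : ℝ) ^ α)⁻¹)) *
    (2 / T) ^ α

noncomputable def holderToWaveletConst (T α : ℝ) : ℝ := min (T ^ α)⁻¹ (2 ^ α * √T / (2 * T ^ α))

lemma waveletToHolderConst_pos {T α : ℝ} (hT : 0 < T) (hα : α ∈ Ioo 0 1) :
    0 < waveletToHolderConst T α := by
  have hr := half_lt_inv_two_rpow hα.2
  have hr1 := inv_two_rpow_lt_one hα.1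
  have : 0 < 2 * ((2 : ℝ) ^ α)⁻¹ - 1 := by linarith
  have : 0 < 1 - ((2 : ℝ) ^ α)⁻¹ := by linarith
  unfold waveletToHolderConst
  positivity

lemma holderToWaveletConst_pos {T : ℝ} (hT : 0 < T) (α : ℝ) : 0 < holderToWaveletConst T α := by
  have := Real.sqrt_pos.2 hT
  have := Real.rpow_pos_of_pos hT α
  unfold holderToWaveletConst
  positivity

section Schauder

variable {d : ℕ} {ψ : ℝ → EuclideanSpace ℝ (Fin d)} {T α B : ℝ}

lemma schauderCoef_succ (p k : ℕ) :
    schauderCoef T ψ p (k + 1) = √(2 ^ p / T) • secondDiff ψ T p k := by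
  simp only [schauderCoef, secondDiff, dyadicPoint]
  push_cast
  ring_nf

lemma weighted_norm_schauderCoef_succ (hT : 0 < T) (α : ℝ) (p k : ℕ) :
    (2 : ℝ) ^ ((α - 1 / 2) * p) * ‖schauderCoef T ψ p (k + 1)‖ =
      ‖secondDiff ψ T p k‖ / (√T * ((2 : ℝ) ^ α)⁻¹ ^ p) := by
  rw [schauderCoef_succ, norm_smul, Real.norm_of_nonneg (Real.sqrt_nonneg _),
    Real.sqrt_div (by positivity), ← mul_assoc, mul_div_assoc', two_rpow_mul_sqrt_two_pow, inv_pow]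
  field_simp

theorem norm_sub_le_of_weighted_schauderCoef_le (hT : 0 < T) (hα : α ∈ Ioo 0 1)
    (hψ : ContinuousOn ψ (Icc 0 T)) (h0 : ‖ψ T - ψ 0‖ ≤ B)
    (hcoef : ∀ p m : ℕ, 1 ≤ m → m ≤ 2 ^ p →
      (2 : ℝ) ^ ((α - 1 / 2) * p) * ‖schauderCoef T ψ p m‖ ≤ B)
    {s t : ℝ} (hs : s ∈ Icc 0 T) (ht : t ∈ Icc 0 T) :
    ‖ψ t - ψ s‖ ≤ waveletToHolderConst T α * B * |t - s| ^ α := by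
  have hB : 0 ≤ B := (norm_nonneg _).trans h0
  have hX : ∀ p k : ℕ, k < 2 ^ p → ‖secondDiff ψ T p k‖ ≤ B * √T * ((2 : ℝ) ^ α)⁻¹ ^ p :=
    fun p k hk ↦ by
      have h := hcoef p (k + 1) (by omega) hk
      rwa [weighted_norm_schauderCoef_succ hT, div_le_iff₀ (by positivity), ← mul_assoc] at h
  have hδ := norm_dyadic_increment_le (half_lt_inv_two_rpow hα.2) (by positivity) h0 hX
  calc ‖ψ t - ψ s‖
      ≤ (B + B * √T / (2 * ((2 : ℝ) ^ α)⁻¹ - 1)) *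
          ((1 + ((2 : ℝ) ^ α)⁻¹) / (1 - ((2 : ℝ) ^ α)⁻¹)) * (2 * (|t - s| / T)) ^ α :=
        norm_sub_le_of_dyadic_increment_le hT hα.1 hψ hδ hs ht
    _ = waveletToHolderConst T α * B * |t - s| ^ α := by
        rw [waveletToHolderConst, show 2 * (|t - s| / T) = 2 / T * |t - s| by ring,
          Real.mul_rpow (by positivity) (abs_nonneg _)]
        ring

lemma holderToWaveletConst_mul_norm_sub_le (hT : 0 < T)
    (hH : ∀ s ∈ Icc 0 T, ∀ t ∈ Icc 0 T, ‖ψ t - ψ s‖ ≤ B * |t - s| ^ α) :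
    holderToWaveletConst T α * ‖ψ T - ψ 0‖ ≤ B := by
  have hTα := Real.rpow_pos_of_pos hT α
  have h := hH 0 (left_mem_Icc.2 hT.le) T (right_mem_Icc.2 hT.le)
  rw [sub_zero, abs_of_pos hT] at h
  calc holderToWaveletConst T α * ‖ψ T - ψ 0‖ ≤ (T ^ α)⁻¹ * (B * T ^ α) :=
        mul_le_mul (min_le_left _ _) h (norm_nonneg _) (inv_nonneg.2 hTα.le)
    _ = B := by field_simp

lemma holderToWaveletConst_mul_weighted_schauderCoef_le (hT : 0 < T)
    (hH : ∀ s ∈ Icc 0 T, ∀ t ∈ Icc 0 T, ‖ψ t - ψ s‖ ≤ B * |t - s| ^ α)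
    {p m : ℕ} (h1 : 1 ≤ m) (h2 : m ≤ 2 ^ p) :
    holderToWaveletConst T α * ((2 : ℝ) ^ ((α - 1 / 2) * p) * ‖schauderCoef T ψ p m‖) ≤ B := by
  obtain ⟨k, rfl⟩ : ∃ k, m = k + 1 := ⟨m - 1, by omega⟩
  have hsT := Real.sqrt_pos.2 hT
  have hTα := Real.rpow_pos_of_pos hT α
  have hX := norm_secondDiff_le_of_holder hT.le hH (p := p) (k := k) (by omega)
  rw [weighted_norm_schauderCoef_succ hT]
  calc holderToWaveletConst T α * (‖secondDiff ψ T p k‖ / (√T * ((2 : ℝ) ^ α)⁻¹ ^ p))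
      ≤ 2 ^ α * √T / (2 * T ^ α) *
          (2 * B * (T / 2 ^ (p + 1)) ^ α / (√T * ((2 : ℝ) ^ α)⁻¹ ^ p)) :=
        mul_le_mul (min_le_right _ _) (by gcongr) (by positivity) (by positivity)
    _ = B := by
        rw [Real.div_rpow hT.le (by positivity), ← Real.rpow_pow_comm zero_le_two, inv_pow]
        field_simp
        ring

end Schauder

/-- Ciesielski isomorphism: for continuous paths `ψ : [0,T] → ℝ^{d'}` with
`ψ 0 = 0`, the `α`-Hölder norm and the wavelet norm
`sup_{(p,m)∈Λ} 2^{(α−1/2)p} |ψ_{pm}|` are equivalent up to constants `c, C` independent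
of `ψ`: a bound `B` on one of the two quantities controls the other. -/
theorem ciesielski_isomorphism (T : ℝ) (hT : 0 < T) (α : ℝ) (hα : α ∈ Ioo (0 : ℝ) 1)
    (d : ℕ) :
    ∃ c C : ℝ, 0 < c ∧ 0 < C ∧
      ∀ ψ : ℝ → EuclideanSpace ℝ (Fin d), Continuous ψ → ψ 0 = 0 →
        ∀ B : ℝ, 0 ≤ B →
          -- wavelet bound implies Hölder bound
          (((‖ψ T - ψ 0‖ ≤ B) ∧
              (∀ p m : ℕ, 1 ≤ m → m ≤ 2 ^ p →
                (2 : ℝ) ^ ((α - 1 / 2) * p) * ‖schauderCoef T ψ p m‖ ≤ B)) →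
            ∀ s ∈ Icc 0 T, ∀ t ∈ Icc 0 T, ‖ψ t - ψ s‖ ≤ C * B * |t - s| ^ α)
          ∧
          -- Hölder bound implies wavelet bound
          ((∀ s ∈ Icc 0 T, ∀ t ∈ Icc 0 T, ‖ψ t - ψ s‖ ≤ B * |t - s| ^ α) →
            (c * ‖ψ T - ψ 0‖ ≤ B ∧
              ∀ p m : ℕ, 1 ≤ m → m ≤ 2 ^ p →
                c * ((2 : ℝ) ^ ((α - 1 / 2) * p) * ‖schauderCoef T ψ p m‖) ≤ B)) := by
  refine ⟨holderToWaveletConst T α, waveletToHolderConst T α, holderToWaveletConst_pos hT α,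
    waveletToHolderConst_pos hT hα, fun ψ hψ _ B _ ↦ ⟨?_, fun hH ↦ ?_⟩⟩
  · rintro ⟨h0, hcoef⟩ s hs t ht
    exact norm_sub_le_of_weighted_schauderCoef_le hT hα hψ.continuousOn h0 hcoef hs ht
  · exact ⟨holderToWaveletConst_mul_norm_sub_le hT hH,
      fun p m h1 h2 ↦ holderToWaveletConst_mul_weighted_schauderCoef_le hT hH h1 h2⟩
end

section
/- For any control ω on [0,T] and β > 0, the accumulated β-local ω-variation M_β(ω) = sup { Σ_i ω(t_i, t_{i+1}) : partitions (t_i) of [0,T] with ω(t_i, t_{i+1}) ≤ β for all i } satisfies β · N_β(ω) ≤ M_β(ω) ≤ β (2 N_β(ω) + 1), where N_β(ω) is the number of elements of the greedy sequence strictly before T. -/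
/-!
Along the greedy sequence every step `[τ_i, τ_{i+1}]` has `ω`-mass at most `β` (continuity at
the first hitting time), and exactly `β` while `τ_{i+1} < T`; the greedy partition therefore
shows `β N ≤ M_β`. Conversely, for any partition with steps of mass at most `β` the potential
`Φ(x) = 2β j(x) + ω(τ_{j(x)}, x)`, where `j(x)` indexes the greedy interval containing `x`,
grows by at least the mass of each step: within one greedy interval by superadditivity, and
across greedy points because `j` jumps while a single step costs at most `β`. Telescoping gives
`M_β ≤ Φ(T) - Φ(0) ≤ β (2N + 1)`.
-/

open Set

/-- The greedy sequence of a control `ω` at level `β` on `[0,T]`: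
`τ_0 = 0`, `τ_{i+1} = inf{t > τ_i : ω(τ_i,t) ≥ β} ∧ T`. -/
noncomputable def greedySeq (ω : ℝ → ℝ → ℝ) (β T : ℝ) : ℕ → ℝ
  | 0 => 0
  | i + 1 => sInf ({t : ℝ | greedySeq ω β T i < t ∧ β ≤ ω (greedySeq ω β T i) t} ∩
      Icc 0 T ∪ {T})

/-- The accumulated `β`-local `ω`-variation
`M_β(ω) = sup { Σ_i ω(t_i,t_{i+1}) : partitions of [0,T] with ω(t_i,t_{i+1}) ≤ β }`. -/
noncomputable def accVar (ω : ℝ → ℝ → ℝ) (β T : ℝ) : ℝ :=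
  sSup {v : ℝ | ∃ n : ℕ, ∃ t : Fin (n + 1) → ℝ,
    Monotone t ∧ t 0 = 0 ∧ t (Fin.last n) = T ∧
    (∀ i : Fin n, ω (t i.castSucc) (t i.succ) ≤ β) ∧
    v = ∑ i : Fin n, ω (t i.castSucc) (t i.succ)}

def admissibleSums (ω : ℝ → ℝ → ℝ) (β T : ℝ) : Set ℝ :=
  {v : ℝ | ∃ n : ℕ, ∃ t : Fin (n + 1) → ℝ,
    Monotone t ∧ t 0 = 0 ∧ t (Fin.last n) = T ∧
    (∀ i : Fin n, ω (t i.castSucc) (t i.succ) ≤ β) ∧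
    v = ∑ i : Fin n, ω (t i.castSucc) (t i.succ)}

theorem accVar_eq_sSup (ω : ℝ → ℝ → ℝ) (β T : ℝ) : accVar ω β T = sSup (admissibleSums ω β T) :=
  rfl

theorem sum_range_mem_admissibleSums {ω : ℝ → ℝ → ℝ} {β T : ℝ} {τ : ℕ → ℝ} {n : ℕ}
    (hτ : Monotone τ) (hτ0 : τ 0 = 0) (hτn : τ n = T) (hτβ : ∀ j, ω (τ j) (τ (j + 1)) ≤ β) :
    ∑ i ∈ Finset.range n, ω (τ i) (τ (i + 1)) ∈ admissibleSums ω β T :=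
  ⟨n, fun j => τ j, fun _ _ h => hτ h, hτ0, hτn, fun i => hτβ i,
    (Fin.sum_univ_eq_sum_range (fun i => ω (τ i) (τ (i + 1))) n).symm⟩

theorem Fin.sum_succ_sub_castSucc {M : Type*} [AddCommGroup M] {n : ℕ} (f : Fin (n + 1) → M) :
    ∑ i : Fin n, (f i.succ - f i.castSucc) = f (Fin.last n) - f 0 := by
  induction n with
  | zero => simp
  | succ n ih =>
    rw [Fin.sum_univ_castSucc]
    simp only [Fin.succ_castSucc]
    rw [ih (fun j => f j.castSucc)]
    simp

section HittingTime

variable {f : ℝ → ℝ} {β a b c : ℝ}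

theorem bddBelow_hit : BddBelow ({t | a < t ∧ β ≤ f t} ∩ Icc c b ∪ {b}) :=
  BddBelow.union ⟨a, fun _ ht => ht.1.1.le⟩ bddBelow_singleton

theorem sInf_hit_mem_Icc (hab : a ≤ b) :
    sInf ({t | a < t ∧ β ≤ f t} ∩ Icc c b ∪ {b}) ∈ Icc a b := by
  refine ⟨le_csInf ⟨b, Or.inr rfl⟩ ?_, csInf_le bddBelow_hit (Or.inr rfl)⟩
  rintro t (ht | rfl)
  exacts [ht.1.1.le, hab]

theorem apply_sInf_hit_le (hca : c ≤ a) (hab : a ≤ b) (hf : ContinuousOn f (Icc a b))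
    (hfa : f a ≤ β) : f (sInf ({t | a < t ∧ β ≤ f t} ∩ Icc c b ∪ {b})) ≤ β := by
  set σ := sInf ({t | a < t ∧ β ≤ f t} ∩ Icc c b ∪ {b})
  have hσ : σ ∈ Icc a b := sInf_hit_mem_Icc hab
  rcases hσ.1.eq_or_lt with haσ | haσ
  · rwa [← haσ]
  have hbelow : Ioo a σ ⊆ Icc a b ∩ f ⁻¹' Iic β := by
    rintro t ⟨hat, htσ⟩
    refine ⟨⟨hat.le, htσ.le.trans hσ.2⟩, ?_⟩
    show f t ≤ β
    by_contra! hβt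
    exact htσ.not_ge <| csInf_le bddBelow_hit
      (Or.inl ⟨⟨hat, hβt.le⟩, hca.trans hat.le, htσ.le.trans hσ.2⟩)
  have hclosed := hf.preimage_isClosed_of_isClosed isClosed_Icc (isClosed_Iic (a := β))
  have hσmem : σ ∈ closure (Ioo a σ) := by
    rw [closure_Ioo haσ.ne]
    exact right_mem_Icc.2 haσ.le
  exact (hclosed.closure_subset_iff.2 hbelow hσmem).2

theorem le_apply_sInf_hit (hf : ContinuousOn f (Icc a b))
    (hlt : sInf ({t | a < t ∧ β ≤ f t} ∩ Icc c b ∪ {b}) < b) :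
    β ≤ f (sInf ({t | a < t ∧ β ≤ f t} ∩ Icc c b ∪ {b})) := by
  set S := {t | a < t ∧ β ≤ f t} ∩ Icc c b
  have hσ : sInf (S ∪ {b}) ∈ closure S := by
    have := csInf_mem_closure (s := S ∪ {b}) ⟨b, Or.inr rfl⟩ bddBelow_hit
    rw [closure_union, closure_singleton] at this
    exact this.resolve_right hlt.ne
  have hclosed := hf.preimage_isClosed_of_isClosed isClosed_Icc (isClosed_Ici (a := β))
  have hS : S ⊆ Icc a b ∩ f ⁻¹' Ici β := fun t ht => ⟨⟨ht.1.1.le, ht.2.2⟩, ht.1.2⟩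
  exact (closure_minimal hS hclosed hσ).2

end HittingTime

structure IsControl (ω : ℝ → ℝ → ℝ) (T : ℝ) : Prop where
  continuousOn : ContinuousOn (fun st : ℝ × ℝ => ω st.1 st.2)
    {st : ℝ × ℝ | 0 ≤ st.1 ∧ st.1 ≤ st.2 ∧ st.2 ≤ T}
  nonneg : ∀ s t, 0 ≤ s → s ≤ t → t ≤ T → 0 ≤ ω s t
  superadditive : ∀ s t u, 0 ≤ s → s ≤ t → t ≤ u → u ≤ T → ω s t + ω t u ≤ ω s u
  apply_self : ∀ t, 0 ≤ t → t ≤ T → ω t t = 0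

namespace IsControl

variable {ω : ℝ → ℝ → ℝ} {T : ℝ}

theorem apply_le_apply (hω : IsControl ω T) {s t u : ℝ} (hs : 0 ≤ s) (hst : s ≤ t)
    (htu : t ≤ u) (hu : u ≤ T) : ω s t ≤ ω s u := by
  linarith [hω.superadditive s t u hs hst htu hu, hω.nonneg t u (hs.trans hst) htu hu]

theorem continuousOn_right (hω : IsControl ω T) {s : ℝ} (hs : 0 ≤ s) :
    ContinuousOn (ω s) (Icc s T) :=
  hω.continuousOn.comp (f := fun t => (s, t)) (Continuous.continuousOn (by fun_prop))
    fun _ ht => ⟨hs, ht.1, ht.2⟩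

end IsControl

section Greedy

variable {ω : ℝ → ℝ → ℝ} {β T : ℝ}

theorem greedySeq_mem_Icc (hT : 0 ≤ T) (i : ℕ) : greedySeq ω β T i ∈ Icc 0 T := by
  induction i with
  | zero => exact ⟨le_rfl, hT⟩
  | succ i ih =>
    have := sInf_hit_mem_Icc (f := ω (greedySeq ω β T i)) (β := β) (c := 0) ih.2
    exact ⟨ih.1.trans this.1, this.2⟩

theorem greedySeq_monotone (hT : 0 ≤ T) : Monotone (greedySeq ω β T) :=
  monotone_nat_of_le_succ fun i => (sInf_hit_mem_Icc (greedySeq_mem_Icc hT i).2).1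

theorem IsControl.apply_greedySeq_succ_le (hω : IsControl ω T) (hβ : 0 ≤ β) (hT : 0 ≤ T)
    (i : ℕ) : ω (greedySeq ω β T i) (greedySeq ω β T (i + 1)) ≤ β := by
  have hτ := greedySeq_mem_Icc (ω := ω) (β := β) hT i
  exact apply_sInf_hit_le hτ.1 hτ.2 (hω.continuousOn_right hτ.1)
    ((hω.apply_self _ hτ.1 hτ.2).le.trans hβ)

theorem IsControl.le_apply_greedySeq_succ (hω : IsControl ω T) (hT : 0 ≤ T) {i : ℕ}
    (hlt : greedySeq ω β T (i + 1) < T) :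
    β ≤ ω (greedySeq ω β T i) (greedySeq ω β T (i + 1)) :=
  le_apply_sInf_hit (hω.continuousOn_right (greedySeq_mem_Icc hT i).1) hlt

theorem IsControl.mul_le_sum_greedySeq (hω : IsControl ω T) (hT : 0 ≤ T) {N : ℕ}
    (hN : ∀ i ≤ N, greedySeq ω β T i < T) :
    β * N ≤ ∑ i ∈ Finset.range (N + 1), ω (greedySeq ω β T i) (greedySeq ω β T (i + 1)) := by
  set τ := greedySeq ω β T
  have hfull : N • β ≤ ∑ i ∈ Finset.range N, ω (τ i) (τ (i + 1)) := by
    simpa using Finset.card_nsmul_le_sum (Finset.range N) (fun i => ω (τ i) (τ (i + 1))) β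
      fun i hi => hω.le_apply_greedySeq_succ hT (hN (i + 1) (Finset.mem_range.1 hi))
  have hlast : 0 ≤ ω (τ N) (τ (N + 1)) :=
    hω.nonneg _ _ (greedySeq_mem_Icc hT N).1 (greedySeq_monotone hT N.le_succ)
      (greedySeq_mem_Icc hT (N + 1)).2
  rw [nsmul_eq_mul] at hfull
  rw [Finset.sum_range_succ]
  linarith

end Greedy

section SegmentIndex

variable {τ : ℕ → ℝ} {N : ℕ} {x y : ℝ}

/-- The index `j ≤ N` of the interval `[τ j, τ (j + 1))` containing `x`. -/
noncomputable def segmentIndex (τ : ℕ → ℝ) (N : ℕ) (x : ℝ) : ℕ :=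
  Nat.findGreatest (fun i => τ i ≤ x) N

theorem segmentIndex_le : segmentIndex τ N x ≤ N := Nat.findGreatest_le N

theorem segmentIndex_mono (hxy : x ≤ y) : segmentIndex τ N x ≤ segmentIndex τ N y :=
  Nat.findGreatest_mono_left (fun _ hi => hi.trans hxy) N

theorem apply_segmentIndex_le (hx : τ 0 ≤ x) : τ (segmentIndex τ N x) ≤ x :=
  Nat.findGreatest_spec (P := fun i => τ i ≤ x) N.zero_le hx

theorem le_apply_segmentIndex_succ (hx : x ≤ τ (N + 1)) : x ≤ τ (segmentIndex τ N x + 1) := by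
  rcases segmentIndex_le.eq_or_lt with hN | hN
  · rwa [hN]
  · exact (not_le.1 <|
      Nat.findGreatest_is_greatest (P := fun i => τ i ≤ x) (Nat.lt_succ_self _) hN).le

end SegmentIndex

section Potential

variable {ω : ℝ → ℝ → ℝ} {β T : ℝ} {τ : ℕ → ℝ} {N : ℕ}

noncomputable def segmentPotential (ω : ℝ → ℝ → ℝ) (β : ℝ) (τ : ℕ → ℝ) (N : ℕ) (x : ℝ) : ℝ :=
  2 * β * segmentIndex τ N x + ω (τ (segmentIndex τ N x)) x

theorem IsControl.apply_apply_segmentIndex_le (hω : IsControl ω T) (hτ : Monotone τ)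
    (hτ0 : τ 0 = 0) (hτN : τ (N + 1) = T) (hτβ : ∀ j, ω (τ j) (τ (j + 1)) ≤ β) {x : ℝ} (hx0 : 0 ≤ x)
    (hxT : x ≤ T) : ω (τ (segmentIndex τ N x)) x ≤ β := by
  set j := segmentIndex τ N x
  calc ω (τ j) x ≤ ω (τ j) (τ (j + 1)) :=
        hω.apply_le_apply (hτ0 ▸ hτ j.zero_le) (apply_segmentIndex_le (hτ0 ▸ hx0))
          (le_apply_segmentIndex_succ (hτN ▸ hxT)) (hτN ▸ hτ (Nat.succ_le_succ segmentIndex_le))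
    _ ≤ β := hτβ j

theorem IsControl.le_segmentPotential_sub (hω : IsControl ω T) (hτ : Monotone τ)
    (hτ0 : τ 0 = 0) (hτN : τ (N + 1) = T) (hτβ : ∀ j, ω (τ j) (τ (j + 1)) ≤ β) {x y : ℝ}
    (hx0 : 0 ≤ x) (hxy : x ≤ y) (hyT : y ≤ T) (hxyβ : ω x y ≤ β) :
    ω x y ≤ segmentPotential ω β τ N y - segmentPotential ω β τ N x := by
  have hjx : τ (segmentIndex τ N x) ≤ x := apply_segmentIndex_le (hτ0 ▸ hx0)
  have hjy : τ (segmentIndex τ N y) ≤ y := apply_segmentIndex_le (hτ0 ▸ hx0.trans hxy)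
  have hτj0 : ∀ j, 0 ≤ τ j := fun j => hτ0 ▸ hτ j.zero_le
  have hx := hω.nonneg _ _ (hτj0 _) hjx (hxy.trans hyT)
  have hxβ := hω.apply_apply_segmentIndex_le hτ hτ0 hτN hτβ hx0 (hxy.trans hyT)
  have hy := hω.nonneg _ _ (hτj0 _) hjy hyT
  unfold segmentPotential
  rcases (segmentIndex_mono (τ := τ) (N := N) hxy).eq_or_lt with hj | hj
  · rw [← hj] at hjy hy ⊢
    linarith [hω.superadditive _ x y (hτj0 _) hjx hxy hyT]
  · have hj' : (segmentIndex τ N x : ℝ) + 1 ≤ segmentIndex τ N y := by exact_mod_cast hj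
    nlinarith

theorem IsControl.le_of_mem_admissibleSums (hω : IsControl ω T) (hβ : 0 ≤ β) (hτ : Monotone τ)
    (hτ0 : τ 0 = 0) (hτN : τ (N + 1) = T) (hτβ : ∀ j, ω (τ j) (τ (j + 1)) ≤ β) {v : ℝ}
    (hv : v ∈ admissibleSums ω β T) : v ≤ β * (2 * N + 1) := by
  obtain ⟨n, t, ht, ht0, htn, htβ, rfl⟩ := hv
  set Φ := segmentPotential ω β τ N
  have htI : ∀ i, t i ∈ Icc 0 T := fun i => ⟨ht0 ▸ ht (Fin.zero_le i), htn ▸ ht (Fin.le_last i)⟩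
  have hT : 0 ≤ T := (htI 0).1.trans (htI 0).2
  have hΦ0 : 0 ≤ Φ 0 := by
    have := hω.nonneg _ _ (hτ0.ge.trans (hτ (segmentIndex τ N 0).zero_le))
      (apply_segmentIndex_le (N := N) hτ0.le) hT
    unfold Φ segmentPotential
    positivity
  have hΦT : Φ T ≤ β * (2 * N + 1) := by
    have hjN : (segmentIndex τ N T : ℝ) ≤ N := by exact_mod_cast segmentIndex_le
    have := hω.apply_apply_segmentIndex_le hτ hτ0 hτN hτβ hT le_rfl
    unfold Φ segmentPotential
    nlinarith
  calc ∑ i : Fin n, ω (t i.castSucc) (t i.succ)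
      ≤ ∑ i : Fin n, (Φ (t i.succ) - Φ (t i.castSucc)) :=
        Finset.sum_le_sum fun i _ => hω.le_segmentPotential_sub hτ hτ0 hτN hτβ (htI _).1
          (ht Fin.castSucc_lt_succ.le) (htI _).2 (htβ i)
    _ = Φ T - Φ 0 := by rw [← htn, ← ht0]; exact Fin.sum_succ_sub_castSucc (Φ ∘ t)
    _ ≤ β * (2 * N + 1) := by linarith

end Potential

/-- `β N_β(ω) ≤ M_β(ω) ≤ β (2 N_β(ω) + 1)`, where `N_β(ω)` is the number of
greedy-sequence points strictly before `T`. -/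
theorem accVar_greedy_bounds
    (T β : ℝ) (hT : 0 < T) (hβ : 0 < β) (ω : ℝ → ℝ → ℝ)
    (hcont : ContinuousOn (fun st : ℝ × ℝ => ω st.1 st.2)
      {st : ℝ × ℝ | 0 ≤ st.1 ∧ st.1 ≤ st.2 ∧ st.2 ≤ T})
    (hnonneg : ∀ s t, 0 ≤ s → s ≤ t → t ≤ T → 0 ≤ ω s t)
    (hsuper : ∀ s t u, 0 ≤ s → s ≤ t → t ≤ u → u ≤ T → ω s t + ω t u ≤ ω s u)
    (hdiag : ∀ t, 0 ≤ t → t ≤ T → ω t t = 0)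
    (N : ℕ)
    -- `N = N_β(ω) = sup{n : τ_n < T}`
    (hN₁ : ∀ i ≤ N, greedySeq ω β T i < T)
    (hN₂ : greedySeq ω β T (N + 1) = T) :
    β * N ≤ accVar ω β T ∧ accVar ω β T ≤ β * (2 * N + 1) := by
  have hω : IsControl ω T := ⟨hcont, hnonneg, hsuper, hdiag⟩
  have hτ := greedySeq_monotone (ω := ω) (β := β) hT.le
  have hτβ := hω.apply_greedySeq_succ_le hβ.le hT.le
  have hub : ∀ v ∈ admissibleSums ω β T, v ≤ β * (2 * N + 1) :=
    fun _ => hω.le_of_mem_admissibleSums hβ.le hτ rfl hN₂ hτβ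
  have hgreedy := sum_range_mem_admissibleSums hτ rfl hN₂ hτβ
  rw [accVar_eq_sSup]
  exact ⟨(hω.mul_le_sum_greedySeq hT.le hN₁).trans (le_csSup ⟨_, hub⟩ hgreedy),
    Real.sSup_le hub (by positivity)⟩
end
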